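/- Let f : {-1,1}^n → ℝ be computed by a binary decision tree splitting on coordinates, with constant leaves. If a subset S of coordinates has nonzero coefficient c_S in the multilinear expansion of f, then for every subset T ⊆ S there exists some root-to-leaf path in which all variables of T appear; in particular, c_T can be nonzero only for T contained in the set of split variables. -/
import Mathlib


/-- The ±1 value of a Boolean coordinate. -/
def pm (b : Bool) : ℝ := if b then 1 else -1

/-- A binary decision tree on {-1,1}^n with constant leaves, splitting on
single coordinates. -/
inductive DTree (n : ℕ) where
  | leaf (v : ℝ) : DTree n
  | node (i : Fin n) (l r : DTree n) : DTree n

/-- Evaluation of a decision tree: at a node splitting on coordinate `i`,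
go right if `x i = +1` (true), left if `x i = -1` (false). -/
def DTree.eval {n : ℕ} : DTree n → (Fin n → Bool) → ℝ
  | .leaf v, _ => v
  | .node i l r, x => if x i then r.eval x else l.eval x

/-- For each root-to-leaf path, the set of split variables used on it. -/
def DTree.pathVars {n : ℕ} : DTree n → List (Finset (Fin n))
  | .leaf _ => [∅]
  | .node i l r => (l.pathVars ++ r.pathVars).map (insert i)

/-- The multilinear (Fourier) coefficient of a function on {-1,1}^n. -/
noncomputable def coeff {n : ℕ} (f : (Fin n → Bool) → ℝ) (S : Finset (Fin n)) : ℝ :=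
  (2 ^ n : ℝ)⁻¹ * ∑ x : Fin n → Bool, f x * ∏ i ∈ S, pm (x i)


lemma pm_sq (b : Bool) : pm b * pm b = 1 := by cases b <;> simp [pm]

lemma pm_not (b : Bool) : pm (!b) = - pm b := by cases b <;> simp [pm]

lemma coeff_const {n : ℕ} (v : ℝ) (S : Finset (Fin n)) (hS : S.Nonempty) :
    coeff (fun _ => v) S = 0 := by
  obtain ⟨j, hj⟩ := hS
  unfold coeff
  rw [mul_eq_zero]; right
  apply Finset.sum_ninvolution (fun x => Function.update x j (!x j))
  · intro x
    have h1 : ∀ i ∈ S.erase j, pm (Function.update x j (!x j) i) = pm (x i) := by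
      intro i hi
      rw [Function.update_of_ne (Finset.ne_of_mem_erase hi)]
    have : (∏ i ∈ S, pm (Function.update x j (!x j) i))
        = - ∏ i ∈ S, pm (x i) := by
      rw [← Finset.mul_prod_erase S (fun i => pm (Function.update x j (!x j) i)) hj,
          ← Finset.mul_prod_erase S (fun i => pm (x i)) hj,
          Finset.prod_congr rfl h1, Function.update_self, pm_not]
      ring
    rw [this]; ring
  · intro x _ hcontra
    have := congrFun hcontra j
    rw [Function.update_self] at this
    exact (Bool.not_ne_self (x j)) this
  · intro x; exact Finset.mem_univ _
  · intro x
    funext k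
    by_cases hk : k = j
    · subst hk; simp
    · simp [Function.update_of_ne hk]

lemma chi_swap {n : ℕ} (S : Finset (Fin n)) (i : Fin n) (x : Fin n → Bool) :
    (∏ j ∈ S, pm (x j)) * pm (x i)
      = ∏ j ∈ (if i ∈ S then S.erase i else insert i S), pm (x j) := by
  by_cases h : i ∈ S
  · rw [if_pos h, ← Finset.mul_prod_erase S (fun j => pm (x j)) h]
    rw [mul_comm (pm (x i)), mul_assoc, pm_sq, mul_one]
  · rw [if_neg h, Finset.prod_insert h, mul_comm]

lemma coeff_node {n : ℕ} (i : Fin n) (l r : DTree n) (S : Finset (Fin n)) :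
    coeff (DTree.node i l r).eval S
      = (coeff l.eval S - coeff l.eval (if i ∈ S then S.erase i else insert i S)
          + coeff r.eval S + coeff r.eval (if i ∈ S then S.erase i else insert i S)) / 2 := by
  set S' := if i ∈ S then S.erase i else insert i S with hS'
  have key : ∀ x : Fin n → Bool,
      DTree.eval (DTree.node i l r) x * ∏ j ∈ S, pm (x j)
        = (l.eval x * (∏ j ∈ S, pm (x j)) - l.eval x * (∏ j ∈ S', pm (x j))
           + r.eval x * (∏ j ∈ S, pm (x j)) + r.eval x * (∏ j ∈ S', pm (x j))) / 2 := by
    intro x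
    rw [hS', ← chi_swap S i x]
    show (if x i then r.eval x else l.eval x) * _ = _
    cases hx : x i
    · simp [pm, hx]
    · simp [pm, hx]
  simp only [coeff]
  rw [Finset.sum_congr rfl (fun x _ => key x), ← Finset.sum_div,
      Finset.sum_add_distrib, Finset.sum_add_distrib, Finset.sum_sub_distrib]
  ring

lemma main_heredity {n : ℕ} (t : DTree n) (S : Finset (Fin n))
    (h : coeff t.eval S ≠ 0) : ∃ P ∈ t.pathVars, S ⊆ P := by
  induction t generalizing S with
  | leaf v =>
    rcases S.eq_empty_or_nonempty with rfl | hne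
    · exact ⟨∅, by simp [DTree.pathVars], Finset.Subset.refl _⟩
    · exact absurd (coeff_const v S hne) h
  | node i l r ihl ihr =>
    set S' := if i ∈ S then S.erase i else insert i S with hS'
    have hsub : S ⊆ insert i S' := by
      by_cases hmem : i ∈ S
      · rw [hS', if_pos hmem, Finset.insert_erase hmem]
      · rw [hS', if_neg hmem]
        exact (Finset.subset_insert _ _).trans (Finset.subset_insert _ _)
    have hmem_path : ∀ Q, (Q ∈ l.pathVars ∨ Q ∈ r.pathVars) →
        insert i Q ∈ (DTree.node i l r).pathVars := by
      intro Q hQ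
      simp only [DTree.pathVars, List.mem_map, List.mem_append]
      exact ⟨Q, hQ, rfl⟩
    have hsplit := coeff_node i l r S
    rw [← hS'] at hsplit
    have hcases : coeff l.eval S ≠ 0 ∨ coeff l.eval S' ≠ 0 ∨
        coeff r.eval S ≠ 0 ∨ coeff r.eval S' ≠ 0 := by
      by_contra hc
      push_neg at hc
      obtain ⟨h1, h2, h3, h4⟩ := hc
      rw [hsplit, h1, h2, h3, h4] at h
      norm_num at h
    rcases hcases with h1 | h2 | h3 | h4
    · obtain ⟨P, hP, hSP⟩ := ihl S h1
      exact ⟨insert i P, hmem_path P (Or.inl hP),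
        hSP.trans (Finset.subset_insert _ _)⟩
    · obtain ⟨P, hP, hSP⟩ := ihl S' h2
      exact ⟨insert i P, hmem_path P (Or.inl hP),
        hsub.trans (Finset.insert_subset_insert _ hSP)⟩
    · obtain ⟨P, hP, hSP⟩ := ihr S h3
      exact ⟨insert i P, hmem_path P (Or.inr hP),
        hSP.trans (Finset.subset_insert _ _)⟩
    · obtain ⟨P, hP, hSP⟩ := ihr S' h4
      exact ⟨insert i P, hmem_path P (Or.inr hP),
        hsub.trans (Finset.insert_subset_insert _ hSP)⟩

/-- Effect heredity for decision trees: a multilinear coefficient c_S can be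
nonzero only if all variables of S (and hence every subset T ⊆ S) appear as
split variables on a common root-to-leaf path. -/
theorem stmt_6 (n : ℕ) (t : DTree n) (S : Finset (Fin n))
    (hS : coeff t.eval S ≠ 0) :
    ∀ T ⊆ S, ∃ P ∈ t.pathVars, T ⊆ P := by
  intro T hT
  obtain ⟨P, hP, hSP⟩ := main_heredity t S hS
  exact ⟨P, hP, hT.trans hSP⟩
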